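/- For all nonnegative integers r and all integers n ≥ 2, S_{r+2}(n) = n^2·S_r(n) − 2n(2n−1)·S_r(n−1). -/

import Mathlib

/-!
Since `|n - k|² = n² - k (2n - k)`, the claim reduces to the weighted sum
`∑ k (2n - k) C(2n, k) |n - k|^r`, and the absorption identity
`k (2n - k) C(2n, k) = 2n (2n - 1) C(2n - 2, k - 1)` turns that sum into
`2n (2n - 1) S_r(n - 1)` after shifting the index by one.
-/

open Finset

theorem Nat.add_one_mul_sub_mul_choose_add_one {R : Type*} [CommRing R] (m k : ℕ) :
    (k + 1 : R) * (m + 1 - k) * (m + 2).choose (k + 1) = (m + 2) * (m + 1) * m.choose k := by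
  rcases le_or_gt k (m + 1) with hk | hk
  · have h1 := congrArg (Nat.cast : ℕ → R) (Nat.add_one_mul_choose_eq (m + 1) k)
    have h2 := congrArg (Nat.cast : ℕ → R) (Nat.choose_mul_succ_eq m k)
    push_cast [Nat.cast_sub hk] at h1 h2
    linear_combination (k - m - 1 : R) * h1 - (m + 2 : R) * h2
  · simp [Nat.choose_eq_zero_of_lt (by omega : m < k),
      Nat.choose_eq_zero_of_lt (by omega : m + 2 < k + 1)]

theorem Finset.sum_range_mul_sub_mul_choose {R : Type*} [CommRing R] (m : ℕ) (f : ℕ → R) :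
    ∑ k ∈ range (m + 3), (k : R) * (m + 2 - k) * (m + 2).choose k * f k =
      (m + 2) * (m + 1) * ∑ k ∈ range (m + 1), (m.choose k : R) * f (k + 1) := by
  rw [sum_range_succ', sum_range_succ, mul_sum]
  push_cast
  simp only [zero_mul, add_zero, show (m : R) + 2 - (m + 1 + 1) = 0 by ring, mul_zero]
  refine sum_congr rfl fun k _ => ?_
  rw [show (m : R) + 2 - (k + 1) = m + 1 - k by ring, Nat.add_one_mul_sub_mul_choose_add_one,
    mul_assoc]

theorem stmt_3 (r : ℕ) (n : ℕ) :
    ∑ k ∈ Finset.range (2 * n + 1), (Nat.choose (2 * n) k : ℤ) * |(n : ℤ) - k| ^ (r + 2) =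
      (n : ℤ) ^ 2 *
          (∑ k ∈ Finset.range (2 * n + 1), (Nat.choose (2 * n) k : ℤ) * |(n : ℤ) - k| ^ r) -
        2 * n * (2 * n - 1) *
          (∑ k ∈ Finset.range (2 * (n - 1) + 1),
            (Nat.choose (2 * (n - 1)) k : ℤ) * |((n : ℤ) - 1) - k| ^ r) := by
  cases n with
  | zero => simp
  | succ m =>
    have hsq (k : ℕ) : ((2 * m + 2).choose k : ℤ) * |((m + 1 : ℕ) : ℤ) - k| ^ (r + 2) =
        ((m + 1 : ℕ) : ℤ) ^ 2 * ((2 * m + 2).choose k * |((m + 1 : ℕ) : ℤ) - k| ^ r)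
          - k * ((2 * m : ℕ) + 2 - k) * (2 * m + 2).choose k * |((m + 1 : ℕ) : ℤ) - k| ^ r := by
      rw [pow_add, sq_abs]; push_cast; ring
    have hshift (k : ℕ) : |((m + 1 : ℕ) : ℤ) - (k + 1 : ℕ)| = |((m + 1 : ℕ) : ℤ) - 1 - k| := by
      push_cast; ring_nf
    rw [show 2 * (m + 1) = 2 * m + 2 by ring, sum_congr rfl fun k _ => hsq k, sum_sub_distrib,
      ← mul_sum, sum_range_mul_sub_mul_choose (2 * m) fun k => |((m + 1 : ℕ) : ℤ) - k| ^ r,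
      Nat.add_sub_cancel]
    simp only [hshift]
    push_cast
    ring
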